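/- arXiv:1706.03570 — 4 statements merged into one kernel-verified Lean document; each statement's English description precedes it below -/
import Mathlib

section
/- Let θ ∈ (0, 1) and δ = cos(θπ/2). Define the lens map λ_θ, the map φ = (1 + λ_θ)/2, the function w(z) = exp(−((1 + z)/(1 − z))^θ), and ψ = w ∘ φ. Then for every z in the open unit disk D, |ψ(z)| ≤ exp(−δ² / |1 − z|^{θ²}). -/
/-! With `s = (1 + z)/(1 - z)` (which has positive real part on the disk) and `q = s ^ θ`, one has
`λ_θ(z) = (q - 1)/(q + 1)`, hence `(1 + φ z)/(1 - φ z) = 1 + 2q` and `|ψ(z)| = exp(-Re((1 + 2q)^θ))`.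
For `Re u ≥ 0` the power `u ^ θ` has argument at most `θπ/2`, so `Re (u ^ θ) ≥ δ |u| ^ θ`.
Applied to `u = s` this gives `|1 + 2q| ≥ 1 + 2δ|s|^θ ≥ δ |1 - z|^(-θ)`, because `|1 - z| ≥ 1` or
`|1 + z| ≥ 1`; applied to `u = 1 + 2q` it gives `Re((1 + 2q)^θ) ≥ δ (δ |1 - z|^(-θ))^θ`,
and `δ^θ ≥ δ` finishes the proof. -/

/-- The lens map `λ_θ`, defined using principal branches of complex powers. -/
noncomputable def lensMap (θ : ℝ) (z : ℂ) : ℂ :=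
  ((1 + z) ^ (θ : ℂ) - (1 - z) ^ (θ : ℂ)) / ((1 + z) ^ (θ : ℂ) + (1 - z) ^ (θ : ℂ))

open Complex Real

theorem norm_one_sub_pos {R : Type*} [NormedRing R] [NormOneClass R] {z : R} (hz : ‖z‖ < 1) :
    0 < ‖1 - z‖ :=
  norm_pos_iff.2 <| sub_ne_zero.2 fun h ↦ by simp [← h] at hz

theorem Real.cos_mul_pi_div_two_nonneg {θ : ℝ} (hθ0 : 0 ≤ θ) (hθ1 : θ ≤ 1) :
    0 ≤ Real.cos (θ * π / 2) :=
  Real.cos_nonneg_of_mem_Icc ⟨by nlinarith [pi_pos], by nlinarith [pi_pos]⟩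

theorem Complex.cos_mul_norm_rpow_le_re_cpow {w : ℂ} (hw : 0 ≤ w.re) {θ : ℝ} (hθ0 : 0 ≤ θ)
    (hθ2 : θ ≤ 2) : Real.cos (θ * π / 2) * ‖w‖ ^ θ ≤ (w ^ (θ : ℂ)).re := by
  have harg : |arg w * θ| ≤ θ * π / 2 := by
    rw [abs_mul, abs_of_nonneg hθ0]
    nlinarith [abs_arg_le_pi_div_two_iff.2 hw]
  have hcos : Real.cos (θ * π / 2) ≤ Real.cos (arg w * θ) := by
    rw [← Real.cos_abs (arg w * θ)]
    exact Real.cos_le_cos_of_nonneg_of_le_pi (abs_nonneg _) (by nlinarith [pi_pos]) harg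
  rw [cpow_ofReal_re, mul_comm]
  exact mul_le_mul_of_nonneg_left hcos (by positivity)

theorem Complex.mul_cpow_of_arg_add_mem {x y : ℂ} (hx : x ≠ 0) (hy : y ≠ 0)
    (harg : arg x + arg y ∈ Set.Ioc (-π) π) (w : ℂ) : (x * y) ^ w = x ^ w * y ^ w := by
  rw [cpow_def_of_ne_zero (mul_ne_zero hx hy), cpow_def_of_ne_zero hx, cpow_def_of_ne_zero hy,
    log_mul hx hy harg, add_mul, exp_add]

theorem re_one_add_div_one_sub_pos {z : ℂ} (hz : ‖z‖ < 1) : 0 < ((1 + z) / (1 - z)).re := by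
  have h1z : 1 - z ≠ 0 := norm_pos_iff.1 (norm_one_sub_pos hz)
  have hnum : (1 + z).re * (1 - z).re + (1 + z).im * (1 - z).im = 1 - ‖z‖ ^ 2 := by
    rw [Complex.sq_norm, normSq_apply]
    simp only [add_re, add_im, sub_re, sub_im, one_re, one_im]
    ring
  rw [div_re, ← add_div, hnum]
  exact div_pos (by nlinarith [norm_nonneg z]) (normSq_pos.2 h1z)

theorem lensMap_eq_of_norm_lt_one {θ : ℝ} {z : ℂ} (hz : ‖z‖ < 1) :
    lensMap θ z = (((1 + z) / (1 - z)) ^ (θ : ℂ) - 1) / (((1 + z) / (1 - z)) ^ (θ : ℂ) + 1) := by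
  have hre : 0 < (1 - z).re := by
    simp only [sub_re, one_re]
    linarith [re_le_norm z]
  have hs := re_one_add_div_one_sub_pos hz
  set s := (1 + z) / (1 - z)
  have h1z : 1 - z ≠ 0 := norm_pos_iff.1 (norm_one_sub_pos hz)
  have hs0 : s ≠ 0 := fun h ↦ by simp [h] at hs
  have harg : arg s + arg (1 - z) ∈ Set.Ioc (-π) π := by
    have h₁ := abs_lt.1 (abs_arg_lt_pi_div_two_iff.2 (.inl hs))
    have h₂ := abs_lt.1 (abs_arg_lt_pi_div_two_iff.2 (.inl hre))
    constructor <;> linarith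
  have hv : (1 - z) ^ (θ : ℂ) ≠ 0 := cpow_ne_zero_iff.2 (.inl h1z)
  rw [lensMap, ← div_mul_cancel₀ (1 + z) h1z, mul_cpow_of_arg_add_mem hs0 h1z harg,
    ← sub_one_mul, ← add_one_mul, mul_div_mul_right _ _ hv]

theorem cayley_half_one_add_inv_cayley {q : ℂ} (hq : q + 1 ≠ 0) :
    (1 + (1 + (q - 1) / (q + 1)) / 2) / (1 - (1 + (q - 1) / (q + 1)) / 2) = 1 + 2 * q := by
  field_simp
  ring

theorem cos_mul_rpow_neg_le_norm_one_add_two_mul {θ : ℝ} (hθ0 : 0 ≤ θ) (hθ1 : θ ≤ 1) {z : ℂ}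
    (hz : ‖z‖ < 1) :
    Real.cos (θ * π / 2) * ‖1 - z‖ ^ (-θ) ≤ ‖1 + 2 * ((1 + z) / (1 - z)) ^ (θ : ℂ)‖ := by
  set s := (1 + z) / (1 - z)
  set δ := Real.cos (θ * π / 2)
  have hδ0 : 0 ≤ δ := cos_mul_pi_div_two_nonneg hθ0 hθ1
  have hq : δ * ‖s‖ ^ θ ≤ (s ^ (θ : ℂ)).re :=
    cos_mul_norm_rpow_le_re_cpow (re_one_add_div_one_sub_pos hz).le hθ0 (by linarith)
  have hre : 1 + 2 * (s ^ (θ : ℂ)).re ≤ ‖1 + 2 * s ^ (θ : ℂ)‖ := by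
    simpa using re_le_norm (1 + 2 * s ^ (θ : ℂ))
  have hx : 0 < ‖1 - z‖ := norm_one_sub_pos hz
  rcases le_total 1 ‖1 - z‖ with hx1 | hx1
  · have : ‖1 - z‖ ^ (-θ) ≤ 1 := Real.rpow_le_one_of_one_le_of_nonpos hx1 (by linarith)
    nlinarith [Real.cos_le_one (θ * π / 2), mul_nonneg hδ0 (Real.rpow_nonneg (norm_nonneg s) θ)]
  · have h1pz : 1 ≤ ‖1 + z‖ := by
      have := norm_add_le (1 + z) (1 - z)
      rw [add_add_sub_cancel, one_add_one_eq_two, Complex.norm_two] at this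
      linarith
    have hs : ‖1 - z‖⁻¹ ≤ ‖s‖ := by
      rw [norm_div]
      exact div_le_div_of_nonneg_right h1pz hx.le |>.trans' (by rw [one_div])
    have : ‖1 - z‖ ^ (-θ) ≤ ‖s‖ ^ θ := by
      rw [Real.rpow_neg hx.le, ← Real.inv_rpow hx.le]
      exact Real.rpow_le_rpow (by positivity) hs hθ0
    nlinarith [mul_nonneg hδ0 (Real.rpow_nonneg (norm_nonneg s) θ)]

theorem sq_div_rpow_sq_le {d x θ : ℝ} (hd0 : 0 ≤ d) (hd1 : d ≤ 1) (hx : 0 < x) (hθ0 : 0 ≤ θ)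
    (hθ1 : θ ≤ 1) : d ^ 2 / x ^ (θ ^ 2) ≤ d * (d * x ^ (-θ)) ^ θ := by
  have hd : d ≤ d ^ θ := by
    simpa using Real.rpow_le_rpow_of_exponent_ge' hd0 hd1 hθ0 hθ1
  calc d ^ 2 / x ^ (θ ^ 2) = d * d * (x ^ (θ * θ))⁻¹ := by rw [sq, sq, div_eq_mul_inv]
    _ ≤ d * d ^ θ * (x ^ (θ * θ))⁻¹ := by gcongr
    _ = d * (d * x ^ (-θ)) ^ θ := by
      rw [Real.mul_rpow hd0 (by positivity), ← Real.rpow_mul hx.le, neg_mul, Real.rpow_neg hx.le,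
        mul_assoc]

/-- For `θ ∈ (0,1)`, `δ = cos(θπ/2)`, `φ = (1 + λ_θ)/2`,
`w(z) = exp(-((1+z)/(1-z))^θ)` and `ψ = w ∘ φ`, one has
`|ψ(z)| ≤ exp(-δ²/|1-z|^{θ²})` for every `z` in the open unit disk. -/
theorem abs_psi_le (θ : ℝ) (hθ : θ ∈ Set.Ioo (0 : ℝ) 1)
    (δ : ℝ) (hδ : δ = Real.cos (θ * Real.pi / 2))
    (φ : ℂ → ℂ) (hφ : ∀ z, φ z = (1 + lensMap θ z) / 2)
    (w : ℂ → ℂ) (hw : ∀ z, w z = Complex.exp (-(((1 + z) / (1 - z)) ^ (θ : ℂ))))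
    (ψ : ℂ → ℂ) (hψ : ψ = w ∘ φ)
    (z : ℂ) (hz : ‖z‖ < 1) :
    ‖ψ z‖ ≤ Real.exp (-(δ ^ 2 / ‖1 - z‖ ^ (θ ^ 2))) := by
  obtain ⟨hθ0, hθ1⟩ := hθ
  set q := ((1 + z) / (1 - z)) ^ (θ : ℂ)
  have hδ0 : 0 ≤ δ := hδ ▸ cos_mul_pi_div_two_nonneg hθ0.le hθ1.le
  have hq : 0 ≤ q.re := (mul_nonneg hδ0 (by positivity)).trans <| hδ ▸
    cos_mul_norm_rpow_le_re_cpow (re_one_add_div_one_sub_pos hz).le hθ0.le (by linarith)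
  have hq1 : q + 1 ≠ 0 := fun h ↦ by
    have := congrArg re h
    simp only [add_re, one_re, zero_re] at this
    linarith
  have hψz : ψ z = exp (-(1 + 2 * q) ^ (θ : ℂ)) := by
    rw [hψ, Function.comp_apply, hw, hφ, lensMap_eq_of_norm_lt_one hz,
      cayley_half_one_add_inv_cayley hq1]
  have hx : 0 < ‖1 - z‖ := norm_one_sub_pos hz
  rw [hψz, norm_exp, neg_re, Real.exp_le_exp, neg_le_neg_iff]
  calc δ ^ 2 / ‖1 - z‖ ^ (θ ^ 2) ≤ δ * (δ * ‖1 - z‖ ^ (-θ)) ^ θ :=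
        sq_div_rpow_sq_le hδ0 (hδ ▸ Real.cos_le_one _) hx hθ0.le hθ1.le
    _ ≤ δ * ‖1 + 2 * q‖ ^ θ := by
        gcongr
        exact hδ ▸ cos_mul_rpow_neg_le_norm_one_add_two_mul hθ0.le hθ1.le hz
    _ ≤ ((1 + 2 * q) ^ (θ : ℂ)).re := hδ ▸ cos_mul_norm_rpow_le_re_cpow
        (by norm_num; linarith) hθ0.le (by linarith)
end

section
/- Let θ ∈ (0, 1) and define φ = (1 + λ_θ)/2 on the open unit disk D. Then there exists a constant C ≥ 1 such that for every z ∈ D, |1 − φ(z)| ≤ C · (1 − |φ(z)|); that is, φ(D) touches the boundary of D only at the point 1, and it does so non-tangentially. -/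
open Real ComplexConjugate

namespace Complex

theorem norm_add_mul_norm_le_norm_add {a b : ℂ} {c : ℝ} (hc0 : 0 ≤ c) (hc1 : c ≤ 1)
    (h : c * (‖a‖ * ‖b‖) ≤ (a * conj b).re) : ‖a‖ + c * ‖b‖ ≤ ‖a + b‖ := by
  have hc2 : c ^ 2 * ‖b‖ ^ 2 ≤ ‖b‖ ^ 2 :=
    mul_le_of_le_one_left (sq_nonneg _) (pow_le_one₀ hc0 hc1)
  have hsq : (‖a‖ + c * ‖b‖) ^ 2 ≤ ‖a + b‖ ^ 2 := by
    rw [Complex.sq_norm (a + b), normSq_add, ← Complex.sq_norm, ← Complex.sq_norm]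
    nlinarith
  exact (pow_le_pow_iff_left₀ (by positivity) (norm_nonneg _) two_ne_zero).mp hsq

theorem mul_norm_div_add_le_one_sub {a b : ℂ} {c : ℝ} (hc0 : 0 ≤ c) (hc1 : c ≤ 1)
    (h : c * (‖a‖ * ‖b‖) ≤ (a * conj b).re) : c * ‖b / (a + b)‖ ≤ 1 - ‖a / (a + b)‖ := by
  rcases eq_or_ne (a + b) 0 with hab | hab
  · simp [hab]
  have hpos : 0 < ‖a + b‖ := norm_pos_iff.mpr hab
  rw [norm_div, norm_div, one_sub_div hpos.ne', mul_div_assoc', div_le_div_iff_of_pos_right hpos]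
  linarith [norm_add_mul_norm_le_norm_add hc0 hc1 h]

theorem re_cpow_mul_conj_cpow (u v : ℂ) (θ : ℝ) :
    (u ^ (θ : ℂ) * conj (v ^ (θ : ℂ))).re
      = ‖u ^ (θ : ℂ)‖ * ‖v ^ (θ : ℂ)‖ * Real.cos (θ * (arg u - arg v)) := by
  rw [mul_re, conj_re, conj_im, cpow_ofReal_re, cpow_ofReal_re, cpow_ofReal_im, cpow_ofReal_im,
    norm_cpow_real, norm_cpow_real, mul_sub, Real.cos_sub]
  ring_nf

theorem abs_arg_sub_arg_le_pi_div_two {u v : ℂ} (hu : 0 < u.re) (hv : 0 < v.re)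
    (h : 0 ≤ (u * conj v).re) : |arg u - arg v| ≤ π / 2 := by
  have hu0 : u ≠ 0 := by rintro rfl; simp at hu
  have hv0 : v ≠ 0 := by rintro rfl; simp at hv
  have hu' := abs_lt.mp (abs_arg_lt_pi_div_two_iff.mpr (Or.inl hu))
  have hv' := abs_lt.mp (abs_arg_lt_pi_div_two_iff.mpr (Or.inl hv))
  have harg_conj : arg (conj v) = -arg v := by
    rw [arg_conj, if_neg (by linarith [pi_pos])]
  have harg : arg (u * conj v) = arg u - arg v := by
    rw [arg_mul hu0 ((map_ne_zero conj).mpr hv0), harg_conj, ← sub_eq_add_neg]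
    constructor <;> linarith
  rw [← harg]
  exact abs_arg_le_pi_div_two_iff.mpr h

end Complex

open Complex

theorem re_one_add_mul_conj_one_sub (z : ℂ) : ((1 + z) * conj (1 - z)).re = 1 - ‖z‖ ^ 2 := by
  rw [Complex.sq_norm, normSq_apply]
  simp only [map_sub, map_one, mul_re, add_re, one_re, sub_re, conj_re, add_im, one_im, zero_add,
    sub_im, conj_im, sub_neg_eq_add]
  ring

theorem cos_mul_pi_div_two_mul_le_re_cpow_mul_conj {θ : ℝ} (hθ0 : 0 ≤ θ) (hθ1 : θ ≤ 1) {z : ℂ}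
    (hz : ‖z‖ < 1) :
    Real.cos (θ * (π / 2)) * (‖(1 + z) ^ (θ : ℂ)‖ * ‖(1 - z) ^ (θ : ℂ)‖)
      ≤ ((1 + z) ^ (θ : ℂ) * conj ((1 - z) ^ (θ : ℂ))).re := by
  have hzre := abs_lt.mp ((abs_re_le_norm z).trans_lt hz)
  have hangle : |arg (1 + z) - arg (1 - z)| ≤ π / 2 := by
    refine abs_arg_sub_arg_le_pi_div_two ?_ ?_ ?_
    · simp only [add_re, one_re]; linarith
    · simp only [sub_re, one_re]; linarith
    · rw [re_one_add_mul_conj_one_sub]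
      nlinarith [norm_nonneg z]
  have hcos : Real.cos (θ * (π / 2)) ≤ Real.cos (θ * (arg (1 + z) - arg (1 - z))) := by
    rw [← Real.cos_abs (θ * (arg (1 + z) - arg (1 - z))), abs_mul, abs_of_nonneg hθ0]
    exact Real.cos_le_cos_of_nonneg_of_le_pi (by positivity) (by nlinarith [pi_pos])
      (mul_le_mul_of_nonneg_left hangle hθ0)
  rw [re_cpow_mul_conj_cpow, mul_comm]
  exact mul_le_mul_of_nonneg_left hcos (by positivity)

theorem one_add_lensMap_div_two {θ : ℝ} {z : ℂ}
    (h : (1 + z) ^ (θ : ℂ) + (1 - z) ^ (θ : ℂ) ≠ 0) :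
    (1 + lensMap θ z) / 2 = (1 + z) ^ (θ : ℂ) / ((1 + z) ^ (θ : ℂ) + (1 - z) ^ (θ : ℂ)) := by
  rw [lensMap]
  field_simp
  ring

/-- For `θ ∈ (0,1)` and `φ = (1 + λ_θ)/2`, there is a constant `C ≥ 1`
such that `|1 - φ(z)| ≤ C (1 - |φ(z)|)` for every `z` in the open unit disk:
`φ(𝔻)` touches the unit circle only at `1`, non-tangentially. -/
theorem phi_nontangential (θ : ℝ) (hθ : θ ∈ Set.Ioo (0 : ℝ) 1)
    (φ : ℂ → ℂ) (hφ : ∀ z, φ z = (1 + lensMap θ z) / 2) :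
    ∃ C : ℝ, 1 ≤ C ∧ ∀ z : ℂ, ‖z‖ < 1 →
      ‖1 - φ z‖ ≤ C * (1 - ‖φ z‖) := by
  obtain ⟨hθ0, hθ1⟩ := hθ
  set c := Real.cos (θ * (π / 2))
  have hc0 : 0 < c := Real.cos_pos_of_mem_Ioo ⟨by nlinarith [pi_pos], by nlinarith [pi_pos]⟩
  have hc1 : c ≤ 1 := Real.cos_le_one _
  refine ⟨c⁻¹, one_le_inv₀ hc0 |>.mpr hc1, fun z hz => ?_⟩
  set a := (1 + z) ^ (θ : ℂ)
  set b := (1 - z) ^ (θ : ℂ)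
  have hangle : c * (‖a‖ * ‖b‖) ≤ (a * conj b).re :=
    cos_mul_pi_div_two_mul_le_re_cpow_mul_conj hθ0.le hθ1.le hz
  have ha : a ≠ 0 := by
    refine (cpow_ne_zero_iff_of_exponent_ne_zero (by exact_mod_cast hθ0.ne')).mpr ?_
    intro h
    rw [eq_neg_of_add_eq_zero_right h, norm_neg, norm_one] at hz
    exact lt_irrefl _ hz
  have hab : a + b ≠ 0 := by
    rw [← norm_pos_iff]
    calc 0 < ‖a‖ := norm_pos_iff.mpr ha
      _ ≤ ‖a‖ + c * ‖b‖ := le_add_of_nonneg_right (by positivity)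
      _ ≤ ‖a + b‖ := norm_add_mul_norm_le_norm_add hc0.le hc1 hangle
  have hφz : φ z = a / (a + b) := (hφ z).trans (one_add_lensMap_div_two hab)
  have h1φ : 1 - φ z = b / (a + b) := by
    rw [hφz, one_sub_div hab, add_sub_cancel_left]
  rw [h1φ, hφz, le_inv_mul_iff₀ hc0]
  exact mul_norm_div_add_le_one_sub hc0.le hc1 hangle
end

section
/- Let θ ∈ (0, 1) and let m_θ be the pull-back (pushforward) of the normalized Lebesgue measure on the unit circle under the boundary map ξ ↦ λ_θ(ξ), where λ_θ extends continuously to the closed unit disk. Then there exist constants c, C > 0 such that for every h ∈ (0, 1], c · h^{1/θ} ≤ m_θ({z ∈ ℂ : |z − 1| ≤ h}) ≤ C · h^{1/θ}. -/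
open MeasureTheory

/-- The pull-back measure `m_θ` on `ℂ`: the image of the normalized Lebesgue measure
of the unit circle (i.e. `(2π)⁻¹ dt` on `[0, 2π)`) under `t ↦ λ_θ(e^{it})`. -/
noncomputable def lensPullback (θ : ℝ) : Measure ℂ :=
  Measure.map (fun t : ℝ => lensMap θ (Complex.exp (Complex.I * t)))
    ((ENNReal.ofReal (2 * Real.pi))⁻¹ • volume.restrict (Set.Ico 0 (2 * Real.pi)))

/-!
On the closed disk, `λ_θ(z) - 1 = -2 (1 - z)^θ / ((1 + z)^θ + (1 - z)^θ)`. Both powers have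
argument at most `θπ/2` in absolute value and one of `|1 ± z|` is at least `1`, so the
denominator has real part at least `cos (θπ/2) > 0`; it also has modulus at most `2^(1+θ)`.
Hence `|λ_θ(z) - 1|` is comparable to `|1 - z|^θ`. On the circle `|1 - e^{it}| = 2 |sin (t/2)|`
is comparable to the distance from `t` to `2πℤ`, so the window `{t : |λ_θ(e^{it}) - 1| ≤ h}`
contains an interval of length `≍ h^{1/θ}` and lies in two such intervals.
-/

open Complex Real Set

lemma cos_mul_pi_div_two_pos {θ : ℝ} (hθ₀ : 0 ≤ θ) (hθ₁ : θ < 1) :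
    0 < Real.cos (θ * (π / 2)) :=
  Real.cos_pos_of_mem_Ioo ⟨by nlinarith [pi_pos], by nlinarith [pi_pos]⟩

lemma cos_mul_pi_div_two_mul_rpow_le_re_cpow {w : ℂ} (hw : 0 ≤ w.re) {θ : ℝ}
    (hθ₀ : 0 ≤ θ) (hθ₂ : θ ≤ 2) :
    Real.cos (θ * (π / 2)) * ‖w‖ ^ θ ≤ (w ^ (θ : ℂ)).re := by
  have harg : |arg w| ≤ π / 2 := abs_arg_le_pi_div_two_iff.mpr hw
  have hcos : Real.cos (θ * (π / 2)) ≤ Real.cos (arg w * θ) := by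
    rw [← Real.cos_abs (arg w * θ), abs_mul, abs_of_nonneg hθ₀]
    exact Real.cos_le_cos_of_nonneg_of_le_pi (by positivity) (by nlinarith [pi_pos])
      (by nlinarith)
  rw [cpow_ofReal_re, mul_comm]
  exact mul_le_mul_of_nonneg_left hcos (by positivity)

lemma cos_mul_pi_div_two_le_norm_cpow_add_cpow {z : ℂ} (hz : |z.re| ≤ 1) {θ : ℝ}
    (hθ₀ : 0 ≤ θ) (hθ₁ : θ ≤ 1) :
    Real.cos (θ * (π / 2)) ≤ ‖(1 + z) ^ (θ : ℂ) + (1 - z) ^ (θ : ℂ)‖ := by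
  obtain ⟨hz₁, hz₂⟩ := abs_le.mp hz
  have hκ : 0 ≤ Real.cos (θ * (π / 2)) :=
    Real.cos_nonneg_of_neg_pi_div_two_le_of_le (by nlinarith [pi_pos]) (by nlinarith [pi_pos])
  have hsum : 1 ≤ ‖1 + z‖ ^ θ + ‖1 - z‖ ^ θ := by
    have : 2 ≤ ‖1 + z‖ + ‖1 - z‖ := by
      simpa [show (1 + z) + (1 - z) = 2 by ring] using norm_add_le (1 + z) (1 - z)
    rcases le_total 1 ‖1 + z‖ with h | h
    · linarith [one_le_rpow h hθ₀, rpow_nonneg (norm_nonneg (1 - z)) θ]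
    · linarith [one_le_rpow (by linarith : 1 ≤ ‖1 - z‖) hθ₀, rpow_nonneg (norm_nonneg (1 + z)) θ]
  calc Real.cos (θ * (π / 2))
      ≤ Real.cos (θ * (π / 2)) * ‖1 + z‖ ^ θ + Real.cos (θ * (π / 2)) * ‖1 - z‖ ^ θ := by
        nlinarith
    _ ≤ ((1 + z) ^ (θ : ℂ)).re + ((1 - z) ^ (θ : ℂ)).re :=
        add_le_add
          (cos_mul_pi_div_two_mul_rpow_le_re_cpow (by rw [add_re, one_re]; linarith) hθ₀
            (by linarith))
          (cos_mul_pi_div_two_mul_rpow_le_re_cpow (by rw [sub_re, one_re]; linarith) hθ₀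
            (by linarith))
    _ ≤ ‖(1 + z) ^ (θ : ℂ) + (1 - z) ^ (θ : ℂ)‖ := by
        rw [← add_re]; exact re_le_norm _

lemma lensMap_sub_one (θ : ℝ) {z : ℂ} (hD : (1 + z) ^ (θ : ℂ) + (1 - z) ^ (θ : ℂ) ≠ 0) :
    lensMap θ z - 1 = -2 * (1 - z) ^ (θ : ℂ) / ((1 + z) ^ (θ : ℂ) + (1 - z) ^ (θ : ℂ)) := by
  unfold lensMap
  field_simp
  ring

lemma norm_lensMap_sub_one (θ : ℝ) {z : ℂ}
    (hD : (1 + z) ^ (θ : ℂ) + (1 - z) ^ (θ : ℂ) ≠ 0) :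
    ‖lensMap θ z - 1‖ = 2 * ‖1 - z‖ ^ θ / ‖(1 + z) ^ (θ : ℂ) + (1 - z) ^ (θ : ℂ)‖ := by
  rw [lensMap_sub_one θ hD, norm_div, norm_mul, norm_cpow_real]
  norm_num

lemma norm_lensMap_sub_one_le {θ : ℝ} (hθ₀ : 0 ≤ θ) (hθ₁ : θ < 1) {z : ℂ} (hz : |z.re| ≤ 1) :
    ‖lensMap θ z - 1‖ ≤ 2 / Real.cos (θ * (π / 2)) * ‖1 - z‖ ^ θ := by
  have hκ := cos_mul_pi_div_two_pos hθ₀ hθ₁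
  have hD := cos_mul_pi_div_two_le_norm_cpow_add_cpow hz hθ₀ hθ₁.le
  rw [norm_lensMap_sub_one θ (norm_pos_iff.mp (hκ.trans_le hD)), div_mul_eq_mul_div]
  gcongr

lemma rpow_norm_one_sub_div_two_le_norm_lensMap_sub_one {θ : ℝ} (hθ₀ : 0 ≤ θ) (hθ₁ : θ < 1)
    {z : ℂ} (hz : ‖z‖ ≤ 1) :
    (‖1 - z‖ / 2) ^ θ ≤ ‖lensMap θ z - 1‖ := by
  have hκ := cos_mul_pi_div_two_pos hθ₀ hθ₁
  have hD := cos_mul_pi_div_two_le_norm_cpow_add_cpow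
    ((abs_re_le_norm z).trans hz) hθ₀ hθ₁.le
  have hD' : ‖(1 + z) ^ (θ : ℂ) + (1 - z) ^ (θ : ℂ)‖ ≤ 2 * 2 ^ θ := by
    have h₂ : ∀ w : ℂ, ‖w‖ ≤ 2 → ‖w ^ (θ : ℂ)‖ ≤ 2 ^ θ := fun w hw => by
      rw [norm_cpow_real]; gcongr
    calc _ ≤ ‖(1 + z) ^ (θ : ℂ)‖ + ‖(1 - z) ^ (θ : ℂ)‖ := norm_add_le _ _
      _ ≤ 2 ^ θ + 2 ^ θ := by
          gcongr <;> apply h₂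
          · linarith [norm_add_le 1 z, norm_one (α := ℂ)]
          · linarith [norm_sub_le 1 z, norm_one (α := ℂ)]
      _ = 2 * 2 ^ θ := by ring
  rw [norm_lensMap_sub_one θ (norm_pos_iff.mp (hκ.trans_le hD)),
    div_rpow (norm_nonneg _) zero_le_two, le_div_iff₀ (hκ.trans_le hD)]
  calc ‖1 - z‖ ^ θ / 2 ^ θ * ‖(1 + z) ^ (θ : ℂ) + (1 - z) ^ (θ : ℂ)‖
      ≤ ‖1 - z‖ ^ θ / 2 ^ θ * (2 * 2 ^ θ) := by gcongr
    _ = 2 * ‖1 - z‖ ^ θ := by field_simp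

lemma le_or_le_of_sin_half_le {t s : ℝ} (ht₀ : 0 ≤ t) (ht : t ≤ 2 * π)
    (hs : Real.sin (t / 2) ≤ s) : t ≤ π * s ∨ 2 * π - π * s ≤ t := by
  have hπ := pi_pos
  rcases le_total t π with htπ | htπ
  · have := mul_le_sin (by linarith : 0 ≤ t / 2) (by linarith)
    left
    field_simp at this
    nlinarith
  · have := mul_le_sin (by linarith : 0 ≤ π - t / 2) (by linarith)
    rw [Real.sin_pi_sub] at this
    right
    field_simp at this
    nlinarith

@[fun_prop]
lemma measurable_lensMap (θ : ℝ) : Measurable (lensMap θ) := by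
  unfold lensMap
  fun_prop

lemma lensPullback_apply (θ : ℝ) {s : Set ℂ} (hs : MeasurableSet s) :
    lensPullback θ s = (ENNReal.ofReal (2 * π))⁻¹ *
      volume ({t : ℝ | lensMap θ (exp (I * t)) ∈ s} ∩ Ico 0 (2 * π)) := by
  have hf : Measurable fun t : ℝ => lensMap θ (exp (I * t)) := by fun_prop
  rw [lensPullback, Measure.map_apply hf hs, Measure.smul_apply,
    Measure.restrict_apply (hf hs), smul_eq_mul]
  rfl

lemma ofReal_div_two_pi_le_lensPullback (θ : ℝ) {s : Set ℂ} {b : ℝ} (hb : b ≤ 2 * π)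
    (hs : ∀ t ∈ Ico 0 b, lensMap θ (exp (I * t)) ∈ s) :
    ENNReal.ofReal (b / (2 * π)) ≤ lensPullback θ s := by
  refine le_trans ?_ (Measure.le_map_apply (by fun_prop) s)
  rw [Measure.smul_apply, Measure.restrict_apply' measurableSet_Ico, smul_eq_mul,
    ENNReal.ofReal_div_of_pos (by positivity), ENNReal.div_eq_inv_mul, ← sub_zero b, ← volume_Ico]
  gcongr
  intro t ht
  exact ⟨hs t (by simpa using ht), ht.1, by linarith [ht.2]⟩

lemma lensPullback_le_ofReal (θ : ℝ) {s : Set ℂ} (hs : MeasurableSet s) {r : ℝ} (hr : 0 ≤ r)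
    (h : ∀ t ∈ Ico 0 (2 * π), lensMap θ (exp (I * t)) ∈ s → t ≤ π * r ∨ 2 * π - π * r ≤ t) :
    lensPullback θ s ≤ ENNReal.ofReal r := by
  rw [lensPullback_apply θ hs]
  calc _ ≤ (ENNReal.ofReal (2 * π))⁻¹ *
        volume (Icc 0 (π * r) ∪ Icc (2 * π - π * r) (2 * π)) := by
        gcongr
        rintro t ⟨hts, ht⟩
        rcases h t ht hts with h' | h'
        exacts [Or.inl ⟨ht.1, h'⟩, Or.inr ⟨h', ht.2.le⟩]
    _ ≤ (ENNReal.ofReal (2 * π))⁻¹ * (ENNReal.ofReal (π * r) + ENNReal.ofReal (π * r)) := by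
        gcongr
        refine (measure_union_le _ _).trans ?_
        simp only [volume_Icc, sub_zero, sub_sub_cancel, le_refl]
    _ = ENNReal.ofReal r := by
        rw [← ENNReal.ofReal_add (by positivity) (by positivity),
          ← ENNReal.ofReal_inv_of_pos (by positivity), ← ENNReal.ofReal_mul (by positivity)]
        congr 1
        field_simp
        ring

lemma ofReal_le_lensPullback_closedBall {θ : ℝ} (hθ₀ : 0 < θ) (hθ₁ : θ < 1) {h : ℝ}
    (h₀ : 0 ≤ h) (h₁ : h ≤ 1) :
    ENNReal.ofReal ((Real.cos (θ * (π / 2)) / 2 * h) ^ (1 / θ) / (2 * π)) ≤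
      lensPullback θ {z : ℂ | ‖z - 1‖ ≤ h} := by
  have hκ₀ := cos_mul_pi_div_two_pos hθ₀.le hθ₁
  have hx₀ : 0 ≤ Real.cos (θ * (π / 2)) / 2 * h := by positivity
  have hx₁ : Real.cos (θ * (π / 2)) / 2 * h ≤ 1 := by
    nlinarith [Real.cos_le_one (θ * (π / 2))]
  apply ofReal_div_two_pi_le_lensPullback
  · linarith [rpow_le_one hx₀ hx₁ (by positivity : 0 ≤ 1 / θ), two_le_pi]
  · intro t ⟨ht₀, htb⟩
    have hre : |(exp (I * t)).re| ≤ 1 := (abs_re_le_norm _).trans (norm_exp_I_mul_ofReal t).le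
    have hchord : ‖1 - exp (I * t)‖ ≤ t := by
      simpa [norm_sub_rev, abs_of_nonneg ht₀] using norm_exp_I_mul_ofReal_sub_one_le (x := t)
    calc ‖lensMap θ (exp (I * t)) - 1‖
        ≤ 2 / Real.cos (θ * (π / 2)) * ‖1 - exp (I * t)‖ ^ θ :=
          norm_lensMap_sub_one_le hθ₀.le hθ₁ hre
      _ ≤ 2 / Real.cos (θ * (π / 2)) * ((Real.cos (θ * (π / 2)) / 2 * h) ^ (1 / θ)) ^ θ := by
          gcongr
          exact hchord.trans htb.le
      _ = h := by
          rw [one_div, rpow_inv_rpow hx₀ hθ₀.ne', ← mul_assoc, div_mul_div_comm,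
            mul_comm 2, div_self (mul_pos hκ₀ two_pos).ne', one_mul]

lemma lensPullback_closedBall_le_ofReal {θ : ℝ} (hθ₀ : 0 < θ) (hθ₁ : θ < 1) {h : ℝ}
    (h₀ : 0 ≤ h) :
    lensPullback θ {z : ℂ | ‖z - 1‖ ≤ h} ≤ ENNReal.ofReal (h ^ (1 / θ)) := by
  refine lensPullback_le_ofReal θ ?_ (by positivity) fun t ⟨ht₀, ht⟩ hmem =>
    le_or_le_of_sin_half_le ht₀ ht.le ?_
  · exact measurableSet_le (by fun_prop) (by fun_prop)
  have hsin : Real.sin (t / 2) ≤ ‖1 - exp (I * t)‖ / 2 := by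
    rw [norm_sub_rev, norm_exp_I_mul_ofReal_sub_one, Real.norm_eq_abs, abs_mul, abs_two,
      mul_div_cancel_left₀ _ two_ne_zero]
    exact le_abs_self _
  refine hsin.trans ((le_rpow_inv_iff_of_pos (by positivity) h₀ hθ₀).mpr ?_) |>.trans_eq
    (by rw [one_div])
  exact (rpow_norm_one_sub_div_two_le_norm_lensMap_sub_one hθ₀.le hθ₁
    (norm_exp_I_mul_ofReal t).le).trans hmem

/-- For `θ ∈ (0,1)` there are `c, C > 0` such that for every
`h ∈ (0, 1]`, `c h^{1/θ} ≤ m_θ({z : |z - 1| ≤ h}) ≤ C h^{1/θ}`. -/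
theorem lensPullback_window_estimate (θ : ℝ) (hθ : θ ∈ Set.Ioo (0 : ℝ) 1) :
    ∃ c > (0 : ℝ), ∃ C > (0 : ℝ), ∀ h : ℝ, 0 < h → h ≤ 1 →
      ENNReal.ofReal (c * h ^ (1 / θ)) ≤
          lensPullback θ {z : ℂ | ‖z - 1‖ ≤ h} ∧
        lensPullback θ {z : ℂ | ‖z - 1‖ ≤ h} ≤
          ENNReal.ofReal (C * h ^ (1 / θ)) := by
  obtain ⟨hθ₀, hθ₁⟩ := hθ
  have hκ := cos_mul_pi_div_two_pos hθ₀.le hθ₁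
  refine ⟨(Real.cos (θ * (π / 2)) / 2) ^ (1 / θ) / (2 * π), by positivity, 1, one_pos,
    fun h h₀ h₁ => ⟨?_, ?_⟩⟩
  · convert ofReal_le_lensPullback_closedBall hθ₀ hθ₁ h₀.le h₁ using 2
    rw [mul_rpow (by positivity) h₀.le]
    ring
  · simpa using lensPullback_closedBall_le_ofReal hθ₀ hθ₁ h₀.le
end

section
/- Let θ ∈ (0, 1/2). Then the integral ∫_0^{2π} (1 − |λ_θ(e^{it})|²)^{−2} dt is finite. -/
/-!
Put `a = (1 + z) ^ θ` and `b = (1 - z) ^ θ`, so that `λ_θ(z) = (a - b) / (a + b)` and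
`1 - |λ_θ(z)|² = 4 Re(a b̄) / |a + b|²`. For `z = e^{it}` both `1 ± z` lie in the closed right
half-plane, so the arguments of `a` and `b` differ by at most `θπ`, whence
`Re(a b̄) ≥ cos(θπ) |1 - z²|^θ = cos(θπ) (2|sin t|)^θ`, while `|a + b| ≤ 4`. Thus the integrand is
`O(|sin t|^{-2θ})`, which is integrable because `2θ < 1`.
-/

open MeasureTheory

open Real ComplexConjugate

theorem Complex.one_sub_norm_sub_div_add_sq {a b : ℂ} (h : a + b ≠ 0) :
    1 - ‖(a - b) / (a + b)‖ ^ 2 = 4 * (a * conj b).re / Complex.normSq (a + b) := by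
  have h' : Complex.normSq (a + b) ≠ 0 := Complex.normSq_pos.mpr h |>.ne'
  rw [norm_div, div_pow, ← Complex.normSq_eq_norm_sq, ← Complex.normSq_eq_norm_sq,
    eq_div_iff h', sub_mul, div_mul_cancel₀ _ h', Complex.normSq_add, Complex.normSq_sub]
  ring

theorem norm_one_add_exp_mul_norm_one_sub_exp (t : ℝ) :
    ‖1 + Complex.exp (Complex.I * t)‖ * ‖1 - Complex.exp (Complex.I * t)‖ = 2 * |sin t| := by
  have h : (1 + Complex.exp (Complex.I * t)) * (1 - Complex.exp (Complex.I * t)) =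
      -(Complex.exp (Complex.I * ↑(2 * t)) - 1) := by
    rw [show Complex.I * ↑(2 * t) = (2 : ℕ) * (Complex.I * t) by push_cast; ring,
      Complex.exp_nat_mul]
    ring
  rw [← norm_mul, h, norm_neg, Complex.norm_exp_I_mul_ofReal_sub_one, norm_mul,
    mul_div_cancel_left₀ t two_ne_zero, Real.norm_two, Real.norm_eq_abs]

theorem cos_mul_pi_pos {θ : ℝ} (h0 : 0 ≤ θ) (h1 : θ < 1 / 2) : 0 < cos (θ * π) :=
  cos_pos_of_mem_Ioo ⟨by nlinarith [pi_pos], by nlinarith [pi_pos]⟩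

theorem cos_mul_pi_mul_rpow_le_re_cpow_mul_conj_cpow {u v : ℂ} (hu : 0 ≤ u.re) (hv : 0 ≤ v.re)
    {θ : ℝ} (h0 : 0 ≤ θ) (h1 : θ ≤ 1) :
    cos (θ * π) * (‖u‖ * ‖v‖) ^ θ ≤ (u ^ (θ : ℂ) * conj (v ^ (θ : ℂ))).re := by
  have hre : (u ^ (θ : ℂ) * conj (v ^ (θ : ℂ))).re =
      (‖u‖ * ‖v‖) ^ θ * cos (u.arg * θ - v.arg * θ) := by
    simp only [Complex.mul_re, Complex.conj_re, Complex.conj_im, Complex.cpow_ofReal_re,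
      Complex.cpow_ofReal_im, cos_sub, mul_rpow (norm_nonneg u) (norm_nonneg v)]
    ring
  have hangle : |u.arg * θ - v.arg * θ| ≤ θ * π := by
    rw [← sub_mul, abs_mul, abs_of_nonneg h0, mul_comm]
    gcongr
    calc |u.arg - v.arg| ≤ |u.arg| + |v.arg| := abs_sub _ _
      _ ≤ π / 2 + π / 2 := add_le_add (Complex.abs_arg_le_pi_div_two_iff.2 hu)
          (Complex.abs_arg_le_pi_div_two_iff.2 hv)
      _ = π := add_halves π
  rw [hre, mul_comm]
  gcongr
  rw [← cos_abs (u.arg * θ - v.arg * θ)]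
  exact cos_le_cos_of_nonneg_of_le_pi (abs_nonneg _) (by nlinarith [pi_pos]) hangle

theorem Complex.norm_cpow_ofReal_le_two {u : ℂ} (hu : ‖u‖ ≤ 2) {θ : ℝ} (h0 : 0 ≤ θ) (h1 : θ ≤ 1) :
    ‖u ^ (θ : ℂ)‖ ≤ 2 := by
  rw [Complex.norm_cpow_real]
  calc ‖u‖ ^ θ ≤ 2 ^ θ := by gcongr
    _ ≤ 2 ^ (1 : ℝ) := rpow_le_rpow_of_exponent_le one_le_two h1
    _ = 2 := rpow_one 2

theorem cos_mul_pi_mul_abs_sin_rpow_le_one_sub_norm_lensMap_sq {θ : ℝ} (h0 : 0 ≤ θ)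
    (h1 : θ < 1 / 2) {t : ℝ} (ht : sin t ≠ 0) :
    cos (θ * π) * |sin t| ^ θ / 4 ≤ 1 - ‖lensMap θ (Complex.exp (Complex.I * t))‖ ^ 2 := by
  set z := Complex.exp (Complex.I * t)
  have hz : ‖z‖ = 1 := Complex.norm_exp_I_mul_ofReal t
  have hzre : |z.re| ≤ 1 := hz ▸ Complex.abs_re_le_norm z
  set a := (1 + z) ^ (θ : ℂ)
  set b := (1 - z) ^ (θ : ℂ)
  have hcos := cos_mul_pi_pos h0 h1
  have hsin : 0 < |sin t| ^ θ := rpow_pos_of_pos (abs_pos.mpr ht) θ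
  have hre : cos (θ * π) * |sin t| ^ θ ≤ (a * conj b).re := calc
    cos (θ * π) * |sin t| ^ θ ≤ cos (θ * π) * (2 * |sin t|) ^ θ := by
      gcongr; linarith [abs_nonneg (sin t)]
    _ = cos (θ * π) * (‖1 + z‖ * ‖1 - z‖) ^ θ := by rw [norm_one_add_exp_mul_norm_one_sub_exp]
    _ ≤ (a * conj b).re := cos_mul_pi_mul_rpow_le_re_cpow_mul_conj_cpow
      (by simp only [Complex.add_re, Complex.one_re]; linarith [abs_le.mp hzre])
      (by simp only [Complex.sub_re, Complex.one_re]; linarith [abs_le.mp hzre]) h0 (by linarith)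
  have hnormSq_pos : 0 < Complex.normSq (a + b) := by
    rw [Complex.normSq_add]
    nlinarith [Complex.normSq_nonneg a, Complex.normSq_nonneg b]
  have hnormSq_le : Complex.normSq (a + b) ≤ 16 := by
    have ha : ‖a‖ ≤ 2 := Complex.norm_cpow_ofReal_le_two
      (by grind [norm_add_le, norm_one]) h0 (by linarith)
    have hb : ‖b‖ ≤ 2 := Complex.norm_cpow_ofReal_le_two
      (by grind [norm_sub_le, norm_one]) h0 (by linarith)
    rw [Complex.normSq_eq_norm_sq]
    nlinarith [norm_add_le a b, norm_nonneg (a + b)]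
  rw [lensMap, Complex.one_sub_norm_sub_div_add_sq (Complex.normSq_pos.mp hnormSq_pos),
    le_div_iff₀ hnormSq_pos]
  nlinarith [mul_pos hcos hsin]

theorem inv_sq_one_sub_norm_lensMap_sq_le {θ : ℝ} (h0 : 0 ≤ θ) (h1 : θ < 1 / 2) {t : ℝ}
    (ht : sin t ≠ 0) :
    ((1 - ‖lensMap θ (Complex.exp (Complex.I * t))‖ ^ 2) ^ 2)⁻¹ ≤
      (4 / cos (θ * π)) ^ 2 * |sin t| ^ (-(2 * θ)) := by
  have hcos := cos_mul_pi_pos h0 h1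
  have hsin : 0 < |sin t| ^ θ := rpow_pos_of_pos (abs_pos.mpr ht) θ
  have hlower := cos_mul_pi_mul_abs_sin_rpow_le_one_sub_norm_lensMap_sq h0 h1 ht
  calc ((1 - ‖lensMap θ (Complex.exp (Complex.I * t))‖ ^ 2) ^ 2)⁻¹
      ≤ ((cos (θ * π) * |sin t| ^ θ / 4) ^ 2)⁻¹ := by gcongr
    _ = (4 / cos (θ * π)) ^ 2 * |sin t| ^ (-(2 * θ)) := by
      rw [rpow_neg (abs_nonneg _), mul_comm 2 θ, rpow_mul (abs_nonneg _)]
      norm_cast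
      field_simp

theorem intervalIntegrable_abs_sin_rpow {r : ℝ} (hr : -1 < r) (a b : ℝ) :
    IntervalIntegrable (fun t => |sin t| ^ r) volume a b := by
  rcases le_or_gt 0 r with hr0 | hr0
  · exact ((continuous_abs.comp continuous_sin).rpow_const fun _ => Or.inr hr0).intervalIntegrable
      a b
  have hperiodic : Function.Periodic (fun t => |sin t| ^ r) π := fun t => by
    simp only [sin_add_pi, abs_neg]
  have hhalf : IntervalIntegrable (fun t => |sin t| ^ r) volume 0 (π / 2) := by
    refine ((intervalIntegral.intervalIntegrable_rpow' hr).const_mul ((2 / π) ^ r)).mono_fun'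
      ((continuous_abs.comp continuous_sin).measurable.pow_const r).aestronglyMeasurable ?_
    rw [Set.uIoc_of_le (by positivity)]
    filter_upwards [ae_restrict_mem measurableSet_Ioc] with t ht
    rw [norm_of_nonneg (by positivity), ← mul_rpow (by positivity) ht.1.le]
    exact rpow_le_rpow_of_nonpos (by have := pi_pos; have := ht.1; positivity)
      ((mul_le_sin ht.1.le ht.2).trans (le_abs_self _)) hr0.le
  have hfull : IntervalIntegrable (fun t => |sin t| ^ r) volume 0 π := by
    refine hhalf.trans ?_
    simpa [sin_pi_sub, sub_half] using (hhalf.comp_sub_left π).symm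
  exact hperiodic.intervalIntegrable₀ pi_ne_zero hfull a b

theorem ae_sin_ne_zero : ∀ᵐ t : ℝ, sin t ≠ 0 :=
  ((Set.countable_range fun n : ℤ => (n : ℝ) * π).mono
    fun _ ht => sin_eq_zero_iff.mp ht).ae_notMem volume

/-- For `θ ∈ (0, 1/2)`, the integral
`∫_0^{2π} (1 - |λ_θ(e^{it})|²)^{-2} dt` is finite, i.e. the function
`t ↦ (1 - |λ_θ(e^{it})|²)⁻²` is integrable on `(0, 2π)`. -/
theorem integrable_inv_sq_one_sub_abs_lensMap (θ : ℝ) (hθ : θ ∈ Set.Ioo (0 : ℝ) (1 / 2)) :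
    IntegrableOn
      (fun t : ℝ => ((1 - ‖lensMap θ (Complex.exp (Complex.I * t))‖ ^ 2) ^ 2)⁻¹)
      (Set.Ioc 0 (2 * Real.pi)) volume := by
  obtain ⟨hθ0, hθ2⟩ := hθ
  have hdom : IntegrableOn (fun t => (4 / cos (θ * π)) ^ 2 * |sin t| ^ (-(2 * θ)))
      (Set.Ioc 0 (2 * π)) volume := by
    rw [← intervalIntegrable_iff_integrableOn_Ioc_of_le (by positivity)]
    exact (intervalIntegrable_abs_sin_rpow (by linarith) _ _).const_mul _
  refine hdom.mono' (Measurable.aestronglyMeasurable <| by unfold lensMap; fun_prop) ?_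
  filter_upwards [ae_restrict_of_ae ae_sin_ne_zero] with t ht
  rw [norm_of_nonneg (by positivity)]
  exact inv_sq_one_sub_norm_lensMap_sq_le hθ0.le hθ2 ht
end
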